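/- arXiv:2108.11090 — 2 statements merged into one kernel-verified Lean document; each statement's English description precedes it below -/
import Mathlib

section
/- For every nonzero real number λ, all real numbers x, y, and every n ≥ 0, the fully degenerate Bell polynomials satisfy the addition formula φ_{n,λ}(x+y) = Σ_{l=0}^{n} C(n,l) φ_{l,λ}(x) φ_{n−l,λ}(y), where C(n,l) is the binomial coefficient. -/
open Nat PowerSeries Finset

noncomputable section

/-- λ-falling factorial (x)_{n,λ} = x(x−λ)···(x−(n−1)λ). -/
def dfall (l x : ℝ) (n : ℕ) : ℝ := ∏ i ∈ range n, (x - i * l)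

/-- degenerate exponential e_λ^x(t) = Σ (x)_{n,λ} t^n/n! as a formal power series. -/
def degExp (l x : ℝ) : PowerSeries ℝ := PowerSeries.mk fun n => dfall l x n / n !

/-- degenerate logarithm log_λ(1+t) = Σ_{n≥1} (∏_{j=1}^{n−1}(λ−j)) t^n/n!. -/
def degLog (l : ℝ) : PowerSeries ℝ :=
  PowerSeries.mk fun n => if n = 0 then 0 else (∏ j ∈ range (n - 1), (l - (j + 1))) / n !

/-- composition Σ_k a_k f^k, valid when f has zero constant term. -/
def psComp (a : ℕ → ℝ) (f : PowerSeries ℝ) : PowerSeries ℝ :=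
  PowerSeries.mk fun n => ∑ k ∈ range (n + 1), a k * PowerSeries.coeff n (f ^ k)

/-- e_λ^x(f), the degenerate exponential composed with f (f with zero constant term). -/
def degExpComp (l x : ℝ) (f : PowerSeries ℝ) : PowerSeries ℝ :=
  psComp (fun k => dfall l x k / k !) f

/-- degenerate Stirling numbers of the second kind. -/
def dS2 (l : ℝ) (n k : ℕ) : ℝ :=
  (n ! : ℝ) / k ! * PowerSeries.coeff n ((degExp l 1 - 1) ^ k)

/-- degenerate Stirling numbers of the first kind. -/
def dS1 (l : ℝ) (n k : ℕ) : ℝ :=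
  (n ! : ℝ) / k ! * PowerSeries.coeff n (degLog l ^ k)

/-- (signed) Stirling numbers of the first kind: coefficients of x(x-1)···(x-n+1). -/
def sS1 (n k : ℕ) : ℝ := (descPochhammer ℝ n).coeff k

/-- fully degenerate Bell polynomial φ_{n,λ}(x). -/
def dBell (l : ℝ) (n : ℕ) (x : ℝ) : ℝ := ∑ k ∈ range (n + 1), dS2 l n k * dfall l x k

/-- degenerate Whitney numbers of the second kind. -/
def dW (m : ℕ) (l : ℝ) (n k : ℕ) : ℝ :=
  (n ! : ℝ) / k ! *
    PowerSeries.coeff n (degExp l 1 * ((degExp l (m : ℝ) - 1) * PowerSeries.C (R := ℝ) (1 / m)) ^ k)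

/-- fully degenerate Dowling polynomial d_{m,λ}(n,x). -/
def dDowling (m : ℕ) (l : ℝ) (n : ℕ) (x : ℝ) : ℝ :=
  ∑ k ∈ range (n + 1), dW m l n k * dfall l x k

/-- division of a power series by t (coefficient shift). -/
def divT (f : PowerSeries ℝ) : PowerSeries ℝ :=
  PowerSeries.mk fun n => PowerSeries.coeff (n + 1) f

/-- degenerate Bernoulli polynomials β_{n,λ}(x): (t/(e_λ(t)−1)) e_λ^x(t) = Σ β_{n,λ}(x) tⁿ/n!. -/
def dBernoulliPoly (l : ℝ) (n : ℕ) (x : ℝ) : ℝ :=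
  (n ! : ℝ) * PowerSeries.coeff n ((divT (degExp l 1 - 1))⁻¹ * degExp l x)

/-- the λ-falling factorial polynomial (x)_{k,λ}. -/
def dfallPoly (l : ℝ) (k : ℕ) : Polynomial ℝ :=
  ∏ i ∈ range k, (Polynomial.X - Polynomial.C (i * l))

/-- degenerate poly-Bell polynomials B^{(r)}_{n,λ}(x). -/
def dPolyBell (r : ℤ) (l : ℝ) (n : ℕ) (x : ℝ) : ℝ :=
  (n ! : ℝ) * PowerSeries.coeff n
    (divT (psComp (fun k => if k = 0 then 0 else dfall l 1 k / ((k - 1)! * (k : ℝ) ^ r))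
        (degLog l)) *
      (divT (degExp l 1 - 1))⁻¹ * degExp l x)

/-- degenerate Bernoulli polynomials of the second kind b_{n,λ}(x). -/
def dBern2 (l : ℝ) (n : ℕ) (x : ℝ) : ℝ :=
  (n ! : ℝ) *
    PowerSeries.coeff n ((divT (degLog l))⁻¹ * PowerSeries.mk fun j => dfall 1 x j / j !)

/-!
`φ_{n,λ}(x)` is `n!` times the `tⁿ`-coefficient of `e_λ^x(e_λ(t) - 1)`. The λ-falling factorials
satisfy the Vandermonde identity, i.e. `e_λ^{x+y} = e_λ^x e_λ^y`, and substituting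
`e_λ(t) - 1` is a ring homomorphism, so the generating function of `φ_{n,λ}(x + y)` is the
product of those of `φ_{n,λ}(x)` and `φ_{n,λ}(y)`; the addition formula is the binomial
convolution of exponential generating functions.
-/

theorem dfall_succ (l x : ℝ) (n : ℕ) : dfall l x (n + 1) = dfall l x n * (x - n * l) :=
  prod_range_succ _ _

theorem dfall_add (l x y : ℝ) (n : ℕ) :
    dfall l (x + y) n =
      ∑ ij ∈ antidiagonal n, (n.choose ij.1 : ℝ) * (dfall l x ij.1 * dfall l y ij.2) := by
  induction n with
  | zero => simp [dfall]
  | succ n ih =>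
    rw [sum_antidiagonal_choose_succ_mul (fun i j => dfall l x i * dfall l y j), ← sum_add_distrib,
      dfall_succ, ih, sum_mul]
    refine sum_congr rfl fun ij hij => ?_
    obtain rfl : ij.1 + ij.2 = n := mem_antidiagonal.mp hij
    rw [Nat.choose_symm_add, dfall_succ, dfall_succ]
    push_cast
    ring

theorem degExp_add (l x y : ℝ) : degExp l (x + y) = degExp l x * degExp l y := by
  ext n
  simp only [degExp, coeff_mul, coeff_mk, dfall_add, sum_div]
  refine sum_congr rfl fun ij hij => ?_
  obtain rfl : ij.1 + ij.2 = n := mem_antidiagonal.mp hij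
  rw [Nat.cast_add_choose]
  field_simp

theorem PowerSeries.coeff_pow_eq_zero_of_lt {R : Type*} [CommSemiring R] {f : PowerSeries R}
    (hf : constantCoeff f = 0) {n d : ℕ} (h : n < d) : coeff n (f ^ d) = 0 :=
  coeff_of_lt_order n ((Nat.cast_lt.mpr h).trans_le (le_order_pow_of_constantCoeff_eq_zero d hf))

theorem constantCoeff_degExp_one_sub_one (l : ℝ) : constantCoeff (degExp l 1 - 1) = 0 := by
  simp [degExp, dfall]

theorem psComp_eq_subst (a : ℕ → ℝ) {f : PowerSeries ℝ} (hf : constantCoeff f = 0) :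
    psComp a f = (PowerSeries.mk a).subst f := by
  ext n
  rw [psComp, coeff_mk, coeff_subst' (HasSubst.of_constantCoeff_zero' hf),
    finsum_eq_sum_of_support_subset (s := range (n + 1)) _ fun d hd => mem_range.mpr ?_]
  · simp only [coeff_mk, smul_eq_mul]
  · by_contra! hnd
    exact hd (by simp [coeff_pow_eq_zero_of_lt hf hnd])

theorem dBell_eq_factorial_mul_coeff (l : ℝ) (n : ℕ) (x : ℝ) :
    dBell l n x = n ! * coeff n ((degExp l x).subst (degExp l 1 - 1)) := by
  rw [degExp.eq_1 l x, ← psComp_eq_subst _ (constantCoeff_degExp_one_sub_one l), psComp, coeff_mk, dBell, mul_sum]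
  refine sum_congr rfl fun k _ => ?_
  rw [dS2]
  ring

theorem PowerSeries.factorial_mul_coeff_mul {R : Type*} [CommSemiring R] (A B : PowerSeries R)
    (n : ℕ) :
    n ! * coeff n (A * B) =
      ∑ j ∈ range (n + 1), n.choose j * (j ! * coeff j A) * ((n - j)! * coeff (n - j) B) := by
  rw [coeff_mul, Nat.sum_antidiagonal_eq_sum_range_succ_mk, mul_sum]
  refine sum_congr rfl fun j hj => ?_
  rw [← Nat.choose_mul_factorial_mul_factorial (Nat.lt_succ_iff.mp (mem_range.mp hj))]
  push_cast
  ring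

theorem stmt1_general (l : ℝ) (x y : ℝ) (n : ℕ) :
    dBell l n (x + y) = ∑ j ∈ range (n + 1), n.choose j * dBell l j x * dBell l (n - j) y := by
  have hsubst := HasSubst.of_constantCoeff_zero' (constantCoeff_degExp_one_sub_one l)
  simp only [dBell_eq_factorial_mul_coeff, degExp_add, subst_mul hsubst, factorial_mul_coeff_mul]

theorem stmt1 (l : ℝ) (hl : l ≠ 0) (x y : ℝ) (n : ℕ) :
    dBell l n (x + y) = ∑ j ∈ range (n + 1), n.choose j * dBell l j x * dBell l (n - j) y :=
  stmt1_general l x y n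

end
end

section
/- Let λ be a nonzero real number and let p be a real polynomial of degree at most n. Then p(x) = Σ_{k=0}^{n} C_k φ_{k,λ}(x) as polynomials, where C_k = (1/k!)⟨(log_λ(1+t))^k | p(x)⟩_λ. -/
/-! Expanding `p` in the basis `(x)_{j,λ}` and each `φ_{k,λ}` in the same basis, the claim says that
the matrices `dS1 λ` and `dS2 λ` are mutually inverse, i.e. that `e_λ(log_λ(1+t)) = 1 + t`.
That identity comes from the differential equations `(1 + λt) e_λ'(t) = e_λ(t)` and
`(1 + t) log_λ'(1+t) = 1 + λ log_λ(1+t)`: by the chain rule `G = e_λ(log_λ(1+t))` satisfies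
`(1 + t) G' = G` with `G(0) = 1`, whose only solution is `1 + t`. -/

open Nat PowerSeries Finset

noncomputable section

namespace PowerSeries

section

variable {R : Type*} [CommRing R]

theorem coeff_pow_eq_zero_of_lt_s4 {f : R⟦X⟧} (hf : constantCoeff f = 0) {n k : ℕ} (h : n < k) :
    coeff n (f ^ k) = 0 :=
  coeff_of_lt_order n ((Nat.cast_lt.mpr h).trans_le (le_order_pow_of_constantCoeff_eq_zero k hf))

theorem coeff_subst_eq_sum_range {f : R⟦X⟧} (hf : constantCoeff f = 0) (g : R⟦X⟧) {n N : ℕ}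
    (hn : n ≤ N) : coeff n (g.subst f) = ∑ k ∈ range (N + 1), coeff k g * coeff n (f ^ k) := by
  rw [coeff_subst' (HasSubst.of_constantCoeff_zero' hf),
    finsum_eq_sum_of_support_subset (s := range (N + 1))]
  · simp only [smul_eq_mul]
  · intro k hk
    by_contra hkN
    rw [coe_range, Set.mem_Iio, not_lt] at hkN
    exact hk (by simp only [coeff_pow_eq_zero_of_lt_s4 hf (show n < k by omega), smul_zero])

end

theorem eq_C_mul_one_add_X_of_one_add_X_mul_derivative_eq {K : Type*} [Field K] [CharZero K]
    {g : K⟦X⟧} (h : (1 + X) * d⁄dX K g = g) : g = C (constantCoeff g) * (1 + X) := by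
  have hrec (n : ℕ) : coeff (n + 2) g * (n + 2) + coeff (n + 1) g * (n + 1) = coeff (n + 1) g := by
    have := congrArg (coeff (n + 1)) h
    rw [add_mul, one_mul, map_add, coeff_succ_X_mul, coeff_derivative, coeff_derivative] at this
    push_cast at this
    linear_combination this
  have hzero (m : ℕ) : coeff (m + 2) g = 0 := by
    induction m with
    | zero => simpa using hrec 0
    | succ m ih =>
      have := hrec (m + 1)
      rw [ih, zero_mul, add_zero] at this
      exact (mul_eq_zero.mp this).resolve_right (by norm_cast)
  have h1 : coeff 1 g = constantCoeff g := by
    have := congrArg (coeff 0) h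
    rw [add_mul, one_mul, map_add, coeff_zero_X_mul, coeff_derivative, add_zero] at this
    simpa using this
  ext (_ | _ | m) <;> simp [h1, hzero, coeff_X]

end PowerSeries

theorem one_add_C_mul_X_mul_derivative_degExp (l x : ℝ) :
    (1 + C l * X) * d⁄dX ℝ (degExp l x) = C x * degExp l x := by
  ext n
  rw [add_mul, one_mul, map_add, mul_assoc, coeff_C_mul, coeff_C_mul, coeff_derivative]
  rcases n with _ | n
  · simp [degExp, dfall]
  · rw [coeff_succ_X_mul, coeff_derivative]
    simp only [degExp, coeff_mk, dfall_succ, Nat.factorial_succ]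
    push_cast
    field_simp
    ring

theorem constantCoeff_degLog (l : ℝ) : constantCoeff (degLog l) = 0 := by
  simp [degLog]

theorem one_add_X_mul_derivative_degLog (l : ℝ) :
    (1 + X) * d⁄dX ℝ (degLog l) = 1 + C l * degLog l := by
  ext n
  rw [add_mul, one_mul, map_add, map_add, coeff_C_mul, coeff_derivative]
  rcases n with _ | n
  · simp [degLog]
  · rw [coeff_succ_X_mul, coeff_derivative]
    simp only [degLog, coeff_mk, coeff_one, Nat.add_one_ne_zero, if_false,
      Nat.add_sub_cancel, prod_range_succ, Nat.factorial_succ]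
    push_cast
    field_simp
    ring

theorem subst_degLog_degExp_one (l : ℝ) : (degExp l 1).subst (degLog l) = 1 + X := by
  have hL := HasSubst.of_constantCoeff_zero' (constantCoeff_degLog l)
  have hlin : (1 + C l * X : ℝ⟦X⟧).subst (degLog l) = 1 + C l * degLog l := by
    rw [← coe_substAlgHom hL, map_add, map_one, map_mul, substAlgHom_X, C_eq_algebraMap,
      AlgHom.commutes]
  have hode : (1 + X) * d⁄dX ℝ ((degExp l 1).subst (degLog l)) =
      (degExp l 1).subst (degLog l) :=
    calc (1 + X) * d⁄dX ℝ ((degExp l 1).subst (degLog l))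
        = (d⁄dX ℝ (degExp l 1)).subst (degLog l) * ((1 + X) * d⁄dX ℝ (degLog l)) := by
          rw [derivative_subst hL]; ring
      _ = ((1 + C l * X) * d⁄dX ℝ (degExp l 1)).subst (degLog l) := by
          rw [one_add_X_mul_derivative_degLog, ← hlin, subst_mul hL, mul_comm]
      _ = (degExp l 1).subst (degLog l) := by
          rw [one_add_C_mul_X_mul_derivative_degExp, map_one, one_mul]
  have hconst : constantCoeff ((degExp l 1).subst (degLog l)) = 1 := by
    rw [← coeff_zero_eq_constantCoeff_apply,
      coeff_subst_eq_sum_range (constantCoeff_degLog l) _ le_rfl]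
    simp [degExp, dfall]
  rw [eq_C_mul_one_add_X_of_one_add_X_mul_derivative_eq hode, hconst, map_one, one_mul]

theorem subst_degLog_pow_degExp_sub_one (l : ℝ) (m : ℕ) :
    ((degExp l 1 - 1) ^ m).subst (degLog l) = X ^ m := by
  have hL := HasSubst.of_constantCoeff_zero' (constantCoeff_degLog l)
  rw [← coe_substAlgHom hL, map_pow, map_sub, map_one, coe_substAlgHom, subst_degLog_degExp_one,
    add_sub_cancel_left]

theorem sum_dS1_mul_dS2 (l : ℝ) {j n : ℕ} (hj : j ≤ n) (m : ℕ) :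
    ∑ k ∈ range (n + 1), dS1 l j k * dS2 l k m = if j = m then 1 else 0 := by
  have hsum := coeff_subst_eq_sum_range (constantCoeff_degLog l) ((degExp l 1 - 1) ^ m) hj
  rw [subst_degLog_pow_degExp_sub_one, coeff_X_pow] at hsum
  calc ∑ k ∈ range (n + 1), dS1 l j k * dS2 l k m
      = (j ! / m ! : ℝ) *
          ∑ k ∈ range (n + 1), coeff k ((degExp l 1 - 1) ^ m) * coeff j (degLog l ^ k) := by
        rw [mul_sum]
        refine sum_congr rfl fun k _ => ?_
        simp only [dS1, dS2]
        field_simp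
    _ = if j = m then 1 else 0 := by
        rw [← hsum]
        split_ifs with h
        · simp [h, Nat.factorial_ne_zero]
        · simp

theorem dBell_eq_sum_range (l x : ℝ) {k N : ℕ} (hk : k ≤ N) :
    dBell l k x = ∑ m ∈ range (N + 1), dS2 l k m * dfall l x m := by
  refine sum_subset (range_subset_range.mpr (by omega)) fun m _ hm => ?_
  rw [mem_range, not_lt] at hm
  rw [dS2, coeff_pow_eq_zero_of_lt_s4 (constantCoeff_degExp_one_sub_one l) (by omega), mul_zero,
    zero_mul]

theorem eval_dfallPoly (l x : ℝ) (k : ℕ) : (dfallPoly l k).eval x = dfall l x k := by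
  simp [dfallPoly, dfall, Polynomial.eval_prod]

theorem stmt4_general (l : ℝ) (n : ℕ) (p : Polynomial ℝ)
    (c : ℕ → ℝ) (hc : p = ∑ k ∈ range (n + 1), Polynomial.C (c k) * dfallPoly l k) (x : ℝ) :
    p.eval x =
      ∑ k ∈ range (n + 1),
        (1 / (k ! : ℝ) *
            ∑ j ∈ range (n + 1), (j ! : ℝ) * PowerSeries.coeff j (degLog l ^ k) * c j) *
          dBell l k x := by
  have hdS1 (k : ℕ) : 1 / (k ! : ℝ) * ∑ j ∈ range (n + 1), (j ! : ℝ) * coeff j (degLog l ^ k) * c j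
      = ∑ j ∈ range (n + 1), c j * dS1 l j k := by
    rw [mul_sum]
    refine sum_congr rfl fun j _ => ?_
    rw [dS1]
    field_simp
  calc p.eval x = ∑ j ∈ range (n + 1), c j * dfall l x j := by
        simp [hc, Polynomial.eval_finsetSum, eval_dfallPoly]
    _ = ∑ j ∈ range (n + 1), c j * ∑ m ∈ range (n + 1),
          (∑ k ∈ range (n + 1), dS1 l j k * dS2 l k m) * dfall l x m := by
        refine sum_congr rfl fun j hj => ?_
        simp_rw [sum_dS1_mul_dS2 l (mem_range_succ_iff.mp hj), ite_mul, one_mul, zero_mul,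
          sum_ite_eq, if_pos hj]
    _ = ∑ k ∈ range (n + 1), (∑ j ∈ range (n + 1), c j * dS1 l j k) *
          ∑ m ∈ range (n + 1), dS2 l k m * dfall l x m := by
        simp_rw [mul_sum, sum_mul, mul_sum]
        conv_lhs => enter [2, j]; rw [sum_comm]
        conv_rhs => enter [2, k]; rw [sum_comm]
        rw [sum_comm]
        simp only [mul_assoc]
    _ = _ := sum_congr rfl fun k hk => by
        rw [hdS1, dBell_eq_sum_range l x (mem_range_succ_iff.mp hk)]

theorem stmt4 (l : ℝ) (hl : l ≠ 0) (n : ℕ) (p : Polynomial ℝ) (hp : p.natDegree ≤ n)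
    (c : ℕ → ℝ) (hc : p = ∑ k ∈ range (n + 1), Polynomial.C (c k) * dfallPoly l k) (x : ℝ) :
    p.eval x =
      ∑ k ∈ range (n + 1),
        (1 / (k ! : ℝ) *
            ∑ j ∈ range (n + 1), (j ! : ℝ) * PowerSeries.coeff j (degLog l ^ k) * c j) *
          dBell l k x :=
  stmt4_general l n p c hc x

end
end
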